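/- Let K be a compact topological group with Haar measure μ, let V be a finite-dimensional complex normed vector space, and let π be a continuous representation of K on V by continuous linear maps. Then the trace of the averaging operator P = ∫_K π(x) dμ(x) equals μ(K) · dim_ℂ V^K, where V^K is the subspace of K-invariant vectors. -/

import Mathlib

open MeasureTheory

/-- The submodule of `K`-invariant vectors of a representation `π` of a group `K` on a
complex normed space `V` by continuous linear maps. -/
def invariantSubmodule {K V : Type*} [Group K] [NormedAddCommGroup V] [NormedSpace ℂ V]
    (π : K →* (V →L[ℂ] V)) : Submodule ℂ V where
  carrier := {v : V | ∀ x : K, π x v = v}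
  zero_mem' := fun x => by simp
  add_mem' := fun hv hw x => by simp [map_add, hv x, hw x]
  smul_mem' := fun c v hv x => by simp [_root_.map_smul, hv x]

/-!
Left invariance of `μ` gives `π y ∘ P = P`, so `P` maps `V` into `V^K`, while on `V^K` the
integrand is constant and `P` acts as multiplication by `μ(K)`. Hence `μ(K)⁻¹ • P` is a projection
onto `V^K`, and the trace of a projection is the dimension of its range.
-/

theorem LinearMap.trace_eq_mul_finrank_of_mapsTo_of_eqOn_smul {k M : Type*} [Field k]
    [AddCommGroup M] [Module k M] [FiniteDimensional k M] {f : M →ₗ[k] M} {W : Submodule k M}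
    {c : k} (hc : c ≠ 0) (hf : ∀ v, f v ∈ W) (hW : ∀ w ∈ W, f w = c • w) :
    LinearMap.trace k M f = c * Module.finrank k W := by
  have hproj : LinearMap.IsProj W (c⁻¹ • f) :=
    ⟨fun v => W.smul_mem _ (hf v), fun w hw => by
      rw [LinearMap.smul_apply, hW w hw, inv_smul_smul₀ hc]⟩
  rw [← smul_inv_smul₀ hc f, map_smul, hproj.trace, smul_eq_mul]

section Average

variable {K V : Type*} [Group K] [MeasurableSpace K] [NormedAddCommGroup V] [NormedSpace ℂ V]
  [CompleteSpace V] {μ : Measure K} {π : K →* (V →L[ℂ] V)}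

theorem integral_apply_mem_invariantSubmodule [MeasurableMul K] [μ.IsMulLeftInvariant]
    (hπ : Integrable (fun x => π x) μ) (v : V) :
    (∫ x, π x ∂μ) v ∈ invariantSubmodule π := by
  intro y
  have hcomp : (π y).comp (∫ x, π x ∂μ) = ∫ x, π x ∂μ := calc
    (π y).comp (∫ x, π x ∂μ) = ∫ x, π (y * x) ∂μ := by
      simp only [map_mul]
      exact ((ContinuousLinearMap.compL ℂ V V V (π y)).integral_comp_comm hπ).symm
    _ = ∫ x, π x ∂μ := integral_mul_left_eq_self (fun x => π x) y
  exact congr($hcomp v)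

theorem integral_apply_of_mem_invariantSubmodule (hπ : Integrable (fun x => π x) μ) {v : V}
    (hv : v ∈ invariantSubmodule π) :
    (∫ x, π x ∂μ) v = μ.real Set.univ • v := by
  rw [ContinuousLinearMap.integral_apply hπ, funext hv, integral_const]

end Average

/-- For a continuous representation `π` of a compact group `K` with Haar measure `μ` on a
finite-dimensional complex normed space `V`, the trace of the averaging operator
`∫_K π(x) dμ(x)` equals `μ(K) · dim_ℂ V^K`. -/
theorem trace_average_eq_volume_mul_finrank_invariants
    {K : Type*} [Group K] [TopologicalSpace K] [IsTopologicalGroup K] [CompactSpace K]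
    [MeasurableSpace K] [BorelSpace K] (μ : Measure K) [μ.IsHaarMeasure]
    {V : Type*} [NormedAddCommGroup V] [NormedSpace ℂ V] [FiniteDimensional ℂ V]
    (π : K →* (V →L[ℂ] V)) (hπ : Continuous fun x : K => π x) :
    LinearMap.trace ℂ V ((∫ x : K, π x ∂μ : V →L[ℂ] V) : V →ₗ[ℂ] V) =
      ((μ Set.univ).toReal : ℂ) * (Module.finrank ℂ (invariantSubmodule π) : ℂ) := by
  have hint : Integrable (fun x => π x) μ :=
    hπ.integrable_of_hasCompactSupport (HasCompactSupport.of_compactSpace _)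
  refine LinearMap.trace_eq_mul_finrank_of_mapsTo_of_eqOn_smul ?_
    (integral_apply_mem_invariantSubmodule hint) fun w hw => ?_
  · exact_mod_cast measureReal_univ_ne_zero
  · rw [ContinuousLinearMap.coe_coe, integral_apply_of_mem_invariantSubmodule hint hw,
      Complex.coe_smul]
    rfl
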